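/- Let k be a field with char k ≠ 2, let (G,D) be a 3-transposition group with D finite, let M = M_{1/2}(k,(G,D)), and let d be a derivation of M. Let ψ: Φ⁺(D₄) → D be a D₄-subspace of (G,D) and let χ,χ' ∈ Φ⁺(D₄) with ⟨χ,χ'⟩ ≠ 0. Then d(ψ(χ))_{ψ(χ')} = 0. -/

import Mathlib

noncomputable section
attribute [local instance] Classical.propDecidable

namespace Paper
/-! ### Basics on 3-transposition groups -/

/-- Conjugation `a^b = b⁻¹ a b`. -/
def conjBy {G : Type*} [Group G] (a b : G) : G := b⁻¹ * a * b

/-- `(G, D)` is a 3-transposition group: `D` is a generating conjugacy class of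
involutions such that the product of any two of its elements has order at most 3. -/
structure Is3TG (G : Type*) [Group G] (D : Set G) : Prop where
  nonempty : D.Nonempty
  conj_mem : ∀ a ∈ D, ∀ g : G, conjBy a g ∈ D
  is_conj : ∀ a ∈ D, ∀ b ∈ D, IsConj a b
  order_two : ∀ a ∈ D, orderOf a = 2
  gen : Subgroup.closure D = ⊤
  order_mul_le : ∀ a ∈ D, ∀ b ∈ D, orderOf (a * b) ≤ 3

/-- A subset `S` is closed under the (abstract) conjugation map `τ`. -/
def SelfConj {X : Type*} (τ : X → X → X) (S : Set X) : Prop := ∀ a ∈ S, ∀ b ∈ S, τ a b ∈ S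

/-- The conjugation map restricted to a self-conjugation-closed subset. -/
def setConj {X : Type*} {τ : X → X → X} {S : Set X} (h : SelfConj τ S) (a b : ↥S) : ↥S :=
  ⟨τ a.1 b.1, h a.1 a.2 b.1 b.2⟩

lemma Is3TG.selfConj {G : Type*} [Group G] {D : Set G} (hD : Is3TG G D) :
    SelfConj conjBy D := fun a ha b _ => hD.conj_mem a ha b

lemma Is3TG.selfConj_inter {G : Type*} [Group G] {D : Set G} (hD : Is3TG G D) (H : Subgroup G) :
    SelfConj conjBy ((H : Set G) ∩ D) := by
  rintro a ⟨haH, haD⟩ b ⟨hbH, hbD⟩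
  exact ⟨H.mul_mem (H.mul_mem (H.inv_mem hbH) haH) hbH, hD.conj_mem a haD b⟩
/-! ### Matsuo algebras and derivations -/

/-- The basis vector of the Matsuo algebra corresponding to a transposition. -/
def bvec (k : Type*) [Field k] {X : Type*} (a : X) : X → k := Pi.single a 1

/-- Product of two basis elements of the Matsuo algebra of an abstract conjugation
structure `τ` on `X` (two distinct elements commute iff `τ a b = a`). -/
def matsuoBasis (k : Type*) [Field k] {X : Type*} (η : k) (τ : X → X → X) (a b : X) :
    X → k :=
  if a = b then Pi.single a 1
  else if τ a b = a then 0
  else (η / 2) • (Pi.single a 1 + Pi.single b 1 - Pi.single (τ a b) 1)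

/-- The multiplication of the Matsuo algebra with parameter `η` of an abstract
conjugation structure `τ` on a finite set `X`. -/
def matsuoMul (k : Type*) [Field k] {X : Type*} [Fintype X] (η : k) (τ : X → X → X)
    (f g : X → k) : X → k :=
  ∑ a : X, ∑ b : X, (f a * g b) • matsuoBasis k η τ a b

/-- Product of two basis elements of the Matsuo algebra `M_η(k, (G, D))`. -/
def matsuoBasisD (k : Type*) [Field k] {G : Type*} [Group G] {D : Set G}
    (h : SelfConj conjBy D) (η : k) (a b : ↥D) : ↥D → k :=
  if a = b then Pi.single a 1
  else if orderOf (a.1 * b.1) = 3 then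
    (η / 2) • (Pi.single a 1 + Pi.single b 1 - Pi.single (setConj h a b) 1)
  else 0

/-- The multiplication of the Matsuo algebra `M_η(k, (G, D))` on the vector space `↥D → k`
with basis `D`. -/
def matsuoMulD (k : Type*) [Field k] {G : Type*} [Group G] {D : Set G} [Fintype ↥D]
    (h : SelfConj conjBy D) (η : k) (f g : ↥D → k) : ↥D → k :=
  ∑ a : ↥D, ∑ b : ↥D, (f a * g b) • matsuoBasisD k h η a b

/-- A linear map `d` is a derivation of the (non-associative) algebra with
multiplication `mul`. -/
def IsDerivation (k : Type*) [Field k] {V : Type*} [AddCommGroup V] [Module k V]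
    (mul : V → V → V) (d : V →ₗ[k] V) : Prop :=
  ∀ f g : V, d (mul f g) = mul (d f) g + mul f (d g)
/-! ### Irreducible simply laced root systems and the 3-transposition structure of `3ⁿ:W` -/

/-- An irreducible simply laced root system of rank `n`, realized on its root lattice
`Λ = ℤⁿ` (identified with `ℤΦ` via a base), together with a choice of positive system.
`B` is the (symmetric, positive definite) bilinear form, all roots have norm `2`, the set
of roots is finite, closed under negation and reflections, has Cartan integers in
`{0, ±1}` for non-proportional roots, spans the lattice, and is irreducible. -/
structure SLRootSystem (n : ℕ) where
  B : (Fin n → ℤ) →ₗ[ℤ] (Fin n → ℤ) →ₗ[ℤ] ℤ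
  symm : ∀ v w, B v w = B w v
  posdef : ∀ v : Fin n → ℤ, v ≠ 0 → 0 < B v v
  Φ : Finset (Fin n → ℤ)
  root_norm : ∀ α ∈ Φ, B α α = 2
  neg_mem : ∀ α ∈ Φ, -α ∈ Φ
  reflect_mem : ∀ β ∈ Φ, ∀ α ∈ Φ, α - B β α • β ∈ Φ
  cartan : ∀ α ∈ Φ, ∀ β ∈ Φ, α ≠ β → α ≠ -β → B α β = 0 ∨ B α β = 1 ∨ B α β = -1
  span_top : Submodule.span ℤ (Φ : Set (Fin n → ℤ)) = ⊤
  irred : ∀ S : Finset (Fin n → ℤ), S ⊆ Φ →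
    (∀ α ∈ S, ∀ β ∈ Φ, β ∉ S → B α β = 0) → S = ∅ ∨ S = Φ
  pos : Finset (Fin n → ℤ)
  pos_subset : pos ⊆ Φ
  pos_iff : ∀ α ∈ Φ, (α ∈ pos ↔ -α ∉ pos)
  pos_add : ∀ α ∈ pos, ∀ β ∈ pos, α + β ∈ Φ → α + β ∈ pos

namespace SLRootSystem

variable {n : ℕ}

lemma neg_reflect_mem_pos (RS : SLRootSystem n) {β α : Fin n → ℤ} (hβ : β ∈ RS.pos)
    (hα : α ∈ RS.pos) (h : α - RS.B β α • β ∉ RS.pos) : -(α - RS.B β α • β) ∈ RS.pos := by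
  have hΦ : α - RS.B β α • β ∈ RS.Φ :=
    RS.reflect_mem β (RS.pos_subset hβ) α (RS.pos_subset hα)
  by_contra h'
  exact h ((RS.pos_iff _ hΦ).mpr h')

lemma sub_mem_pos (RS : SLRootSystem n) {a b : Fin n → ℤ} (ha : a ∈ RS.pos)
    (hb : b ∈ RS.pos) (hne : a ≠ b) (hB : RS.B a b ≠ 0) (h1 : a + b ∉ RS.pos)
    (h2 : a - b ∉ RS.pos) : b - a ∈ RS.pos := by
  have haΦ := RS.pos_subset ha
  have hbΦ := RS.pos_subset hb
  have hneg : a ≠ -b := by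
    intro h
    rw [h] at ha
    exact (RS.pos_iff b hbΦ).mp hb ha
  rcases RS.cartan a haΦ b hbΦ hne hneg with h0 | hone | hmone
  · exact absurd h0 hB
  · have hsym : RS.B b a = 1 := by rw [RS.symm]; exact hone
    have hmem : a - RS.B b a • b ∈ RS.Φ := RS.reflect_mem b hbΦ a haΦ
    rw [hsym, one_smul] at hmem
    by_contra h'
    rw [← neg_sub] at h'
    exact h2 ((RS.pos_iff _ hmem).mpr h')
  · have hsym : RS.B b a = -1 := by rw [RS.symm]; exact hmone
    have hmem : a - RS.B b a • b ∈ RS.Φ := RS.reflect_mem b hbΦ a haΦ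
    rw [hsym] at hmem
    have hmem' : a + b ∈ RS.Φ := by
      have : a - (-1 : ℤ) • b = a + b := by
        rw [neg_smul, one_smul, sub_neg_eq_add]
      rwa [this] at hmem
    exact absurd (RS.pos_add a ha b hb hmem') h1

end SLRootSystem

/-- The transposition class of the 3-transposition group `3ⁿ:W`: the element
`(a, ε)` represents the transposition `(ε ᾱ, σ_α)` for `α` the positive root `a`. -/
def D0 {n : ℕ} (RS : SLRootSystem n) : Type := ↥RS.pos × ZMod 3

instance {n : ℕ} (RS : SLRootSystem n) : Fintype (D0 RS) :=
  inferInstanceAs (Fintype (↥RS.pos × ZMod 3))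

/-- Conjugation in the transposition class of `3ⁿ:W`:
`(ε₁ᾱ, σ_α)^{(ε₂β̄, σ_β)} = ((ε₁ - ε₂⟨β,α⟩) σ_β(α)‾, σ_{σ_β(α)})`, rewritten in terms of
the positive root `±σ_β(α)`. -/
def conj0 {n : ℕ} (RS : SLRootSystem n) : D0 RS → D0 RS → D0 RS := fun a b =>
  if h : (a.1.1 - RS.B b.1.1 a.1.1 • b.1.1) ∈ RS.pos then
    (⟨a.1.1 - RS.B b.1.1 a.1.1 • b.1.1, h⟩, a.2 - ((RS.B b.1.1 a.1.1 : ℤ) : ZMod 3) * b.2)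
  else
    (⟨-(a.1.1 - RS.B b.1.1 a.1.1 • b.1.1), RS.neg_reflect_mem_pos b.1.2 a.1.2 h⟩,
      -(a.2 - ((RS.B b.1.1 a.1.1 : ℤ) : ZMod 3) * b.2))

/-- The vertical lines of the Fischer space of `3ⁿ:W` are the fibres of the first
projection `D₀ → Φ⁺`. -/
def IsVertLine {n : ℕ} (RS : SLRootSystem n) (L : Set (D0 RS)) : Prop :=
  ∃ α : ↥RS.pos, L = {p : D0 RS | p.1 = α}
/-! ### The positive system of type `D₄` and distinguished subspaces of Fischer spaces -/

/-- The positive roots of type `D₄`: `eᵢ - eⱼ` and `eᵢ + eⱼ` for `i < j`. -/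
def D4Pos : Set (Fin 4 → ℤ) :=
  {v | ∃ i j : Fin 4, i < j ∧
    (v = Pi.single i 1 - Pi.single j 1 ∨ v = Pi.single i 1 + Pi.single j 1)}

/-- The standard inner product on `ℤ⁴`. -/
def ip4 (v w : Fin 4 → ℤ) : ℤ := ∑ i, v i * w i

/-- The reflection `σ_χ(χ') = χ' - ⟨χ, χ'⟩ χ` (for `χ` of norm 2). -/
def refl4 (χ χ' : Fin 4 → ℤ) : Fin 4 → ℤ := χ' - ip4 χ χ' • χ

/-- `ψ` is a `D₄`-subspace of the 3-transposition group `(G, D)`. -/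
def IsD4Subspace {G : Type*} [Group G] (D : Set G) (ψ : ↥D4Pos → ↥D) : Prop :=
  Function.Injective ψ ∧
  (∀ χ χ' : ↥D4Pos, χ ≠ χ' → (Commute (ψ χ : G) (ψ χ' : G) ↔ ip4 χ.1 χ'.1 = 0)) ∧
  (∀ χ χ' : ↥D4Pos, ip4 χ.1 χ'.1 ≠ 0 → ∀ χ'' : ↥D4Pos,
    (χ''.1 = refl4 χ'.1 χ.1 ∨ χ''.1 = -refl4 χ'.1 χ.1) →
      conjBy (ψ χ : G) (ψ χ' : G) = (ψ χ'' : G))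

/-- `ψ` is a `3³:2`-subspace of the 3-transposition group `(G, D)`. -/
def Is3cube2Subspace {G : Type*} [Group G] (D : Set G) (ψ : (Fin 3 → ZMod 3) → ↥D) : Prop :=
  Function.Injective ψ ∧
  ∀ x y : Fin 3 → ZMod 3, (ψ (-x - y) : G) = conjBy (ψ x : G) (ψ y : G)

/-- `ψ` is a `3³:S₄`-subspace of the 3-transposition group `(G, D)`; here the
transposition class of `3³:S₄` is modelled as `D0 RS` for `RS` an irreducible simply
laced root system of rank 3 (necessarily of type `A₃`). -/
def Is33S4Subspace {G : Type*} [Group G] (D : Set G) (RS : SLRootSystem 3)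
    (ψ : D0 RS → ↥D) : Prop :=
  Function.Injective ψ ∧
  ∀ x y : D0 RS, (ψ (conj0 RS x y) : G) = conjBy (ψ x : G) (ψ y : G)

section GroupLemmas
variable {G : Type*} [Group G] {D : Set G}

lemma Is3TG.mul_self (hD : Is3TG G D) {a : G} (ha : a ∈ D) : a * a = 1 := by
  have h := pow_orderOf_eq_one a
  rwa [hD.order_two a ha, pow_two] at h

lemma Is3TG.inv_mem_eq (hD : Is3TG G D) {a : G} (ha : a ∈ D) : a⁻¹ = a :=
  inv_eq_of_mul_eq_one_right (hD.mul_self ha)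

lemma conjBy_conjBy {x b : G} (hb : b * b = 1) : conjBy (conjBy x b) b = x := by
  have hb' : b⁻¹ = b := inv_eq_of_mul_eq_one_right hb
  simp only [conjBy, hb']
  calc b * (b * x * b) * b = (b*b) * x * (b*b) := by group
  _ = x := by rw [hb]; group

lemma conjBy_eq_iff {x y b : G} (hb : b * b = 1) : conjBy x b = y ↔ x = conjBy y b := by
  constructor
  · rintro rfl; rw [conjBy_conjBy hb]
  · rintro rfl; rw [conjBy_conjBy hb]

lemma commute_iff_conjBy_eq {a b : G} : Commute a b ↔ conjBy a b = a := by
  unfold conjBy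
  constructor
  · intro h
    calc b⁻¹ * a * b = b⁻¹ * (a * b) := by group
    _ = b⁻¹ * (b * a) := by rw [h.eq]
    _ = a := by group
  · intro h
    have h2 : a * b = b * (b⁻¹ * a * b) := by group
    rw [h] at h2
    exact h2

lemma Is3TG.not_commute_of_three (hD : Is3TG G D) {a b : G} (ha : a ∈ D) (hb : b ∈ D)
    (h3 : orderOf (a * b) = 3) : ¬ Commute a b := by
  intro hc
  have h2 : (a*b)^2 = 1 := by
    rw [hc.mul_pow, pow_two, pow_two, hD.mul_self ha, hD.mul_self hb, one_mul]
  have hdvd := orderOf_dvd_of_pow_eq_one h2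
  rw [h3] at hdvd
  omega

lemma Is3TG.ne_of_three (hD : Is3TG G D) {a b : G} (ha : a ∈ D) (hb : b ∈ D)
    (h3 : orderOf (a * b) = 3) : a ≠ b := by
  rintro rfl
  rw [hD.mul_self ha, orderOf_one] at h3
  omega

lemma Is3TG.orderOf_mul_comm (hD : Is3TG G D) {a b : G} (ha : a ∈ D) (hb : b ∈ D) :
    orderOf (b * a) = orderOf (a * b) := by
  have : (a * b)⁻¹ = b * a := by
    rw [mul_inv_rev, hD.inv_mem_eq ha, hD.inv_mem_eq hb]
  rw [← this, orderOf_inv]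

lemma conjBy_mul {x g h : G} : conjBy x (g * h) = conjBy (conjBy x g) h := by
  unfold conjBy; group

lemma Is3TG.orderOf_eq_three (hD : Is3TG G D) [Fintype ↥D] {a b : G} (ha : a ∈ D) (hb : b ∈ D)
    (hcomm : ¬ Commute a b) : orderOf (a * b) = 3 := by
  set r := a * b with hr
  have hainv : a⁻¹ = a := hD.inv_mem_eq ha
  have hconj : a * r * a⁻¹ = r⁻¹ := by
    rw [hr, mul_inv_rev, hD.inv_mem_eq ha, hD.inv_mem_eq hb]
    calc a * (a * b) * a = (a * a) * (b * a) := by group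
    _ = b * a := by rw [hD.mul_self ha]; group
  have hfin : IsOfFinOrder r := by
    obtain ⟨m0, n0, hmn, heq⟩ := Finite.exists_ne_map_eq_of_infinite
      (fun n : ℕ => (⟨conjBy a (r ^ n), hD.conj_mem a ha _⟩ : ↥D))
    have key : ∀ m n : ℕ, m < n → conjBy a (r ^ m) = conjBy a (r ^ n) → IsOfFinOrder r := by
      intro m n hlt he
      have hs : r ^ m * r ^ (n - m) = r ^ n := by
        rw [← pow_add]; congr 1; omega
      set s := n - m with hsdef
      have hs0 : s ≠ 0 := by omega
      set y := conjBy a (r ^ m) with hy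
      have hcomm2 : Commute y (r ^ s) := by
        rw [commute_iff_conjBy_eq, hy, ← conjBy_mul, hs, ← he]
      have hcr : r ^ m * r * (r ^ m)⁻¹ = r := by
        rw [((Commute.refl r).pow_left m).eq]; group
      have F1 : y * r * y⁻¹ = r⁻¹ := by
        calc y * r * y⁻¹ = (r ^ m)⁻¹ * (a * (r ^ m * r * (r ^ m)⁻¹) * a⁻¹) * r ^ m := by
              rw [hy]; unfold conjBy; group
        _ = (r ^ m)⁻¹ * (a * r * a⁻¹) * r ^ m := by rw [hcr]
        _ = (r ^ m)⁻¹ * (r⁻¹ * r ^ m) := by rw [hconj]; group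
        _ = (r ^ m)⁻¹ * (r ^ m * r⁻¹) := by rw [((Commute.refl r).pow_left m).inv_right.eq]
        _ = r⁻¹ := by group
      have F2 : y * r ^ s * y⁻¹ = (r ^ s)⁻¹ := by
        have hmap := map_pow (MulAut.conj y) r s
        simp only [MulAut.conj_apply] at hmap
        rw [hmap, F1, inv_pow]
      have h5 : y * r ^ s * y⁻¹ = r ^ s := by rw [hcomm2.eq]; group
      have h6 : r ^ s = (r ^ s)⁻¹ := by rw [← F2, h5]
      have h7 : r ^ s * r ^ s = 1 := by nth_rewrite 2 [h6]; group
      exact isOfFinOrder_iff_pow_eq_one.mpr ⟨s + s, by omega, by rw [pow_add]; exact h7⟩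
    rcases hmn.lt_or_gt with h | h
    · exact key _ _ h (Subtype.ext_iff.mp heq)
    · exact key _ _ h (Subtype.ext_iff.mp heq).symm
  have hle : orderOf r ≤ 3 := hD.order_mul_le a ha b hb
  have hpos : 0 < orderOf r := hfin.orderOf_pos
  interval_cases h : orderOf r
  · exfalso
    apply hcomm
    have hr1 : a * b = 1 := by rw [← hr]; exact orderOf_eq_one_iff.mp h
    have hb' : b = a⁻¹ := eq_inv_of_mul_eq_one_right hr1
    rw [hb', hainv]
  · exfalso
    apply hcomm
    have h2 : r ^ 2 = 1 := by rw [← h]; exact pow_orderOf_eq_one r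
    have h3 : a * b * (a * b) = 1 := by rw [← pow_two]; exact h2
    have hba : a * b = (a * b)⁻¹ := eq_inv_of_mul_eq_one_right h3
    rw [mul_inv_rev, hD.inv_mem_eq ha, hD.inv_mem_eq hb] at hba
    exact hba
  · rfl

end GroupLemmas
section MatsuoLemmas
variable {G : Type*} [Group G] {D : Set G}

lemma setConj_self (hD : Is3TG G D) (b : ↥D) : setConj hD.selfConj b b = b := by
  apply Subtype.ext
  show conjBy (b:G) (b:G) = (b:G)
  unfold conjBy; group

lemma setConj_setConj (hD : Is3TG G D) (a b : ↥D) :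
    setConj hD.selfConj (setConj hD.selfConj a b) b = a :=
  Subtype.ext (conjBy_conjBy (hD.mul_self b.2))

lemma setConj_eq_iff (hD : Is3TG G D) {a c : ↥D} (b : ↥D) :
    setConj hD.selfConj a b = c ↔ a = setConj hD.selfConj c b := by
  constructor
  · rintro rfl; exact (setConj_setConj hD a b).symm
  · rintro rfl; exact setConj_setConj hD c b

lemma orderOf_setConj_mul (hD : Is3TG G D) (p b : ↥D) :
    orderOf ((setConj hD.selfConj p b : G) * b) = orderOf ((p:G) * b) := by
  have h1 : (setConj hD.selfConj p b : G) * b = (b:G)⁻¹ * p := by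
    show conjBy (p:G) b * b = (b:G)⁻¹ * p
    unfold conjBy
    calc (b:G)⁻¹ * p * b * b = (b:G)⁻¹ * (p * (b * b)) := by group
    _ = (b:G)⁻¹ * (p * 1) := by rw [hD.mul_self b.2]
    _ = (b:G)⁻¹ * p := by rw [mul_one]
  rw [h1, hD.inv_mem_eq b.2]
  exact hD.orderOf_mul_comm p.2 b.2

lemma Is3TG.conjBy_symm (hD : Is3TG G D) {a b : G} (ha : a ∈ D) (hb : b ∈ D)
    (h3 : orderOf (a * b) = 3) : conjBy a b = conjBy b a := by
  have h1 : (a * b) ^ 3 = 1 := by rw [← h3]; exact pow_orderOf_eq_one _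
  have h2 : (a * b * a) * (b * a * b) = 1 := by
    calc (a*b*a)*(b*a*b) = (a*b)*(a*b)*(a*b) := by group
    _ = (a*b)^3 := by rw [pow_succ, pow_two]
    _ = 1 := h1
  have h4 : b * a * b = (a * b * a)⁻¹ := eq_inv_of_mul_eq_one_right h2
  have h5 : (a * b * a)⁻¹ = a⁻¹ * b⁻¹ * a⁻¹ := by group
  unfold conjBy
  rw [hD.inv_mem_eq ha, hD.inv_mem_eq hb, h4, h5, hD.inv_mem_eq ha, hD.inv_mem_eq hb]

variable (k : Type*) [Field k] [Fintype ↥D]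

lemma single_apply_gen {I : Type*} {inst : DecidableEq I} (a : I) (c : k) (b : I) :
    @Pi.single I (fun _ => k) (fun _ => inferInstance) inst a c b = if b = a then c else 0 := by
  rcases em (b = a) with h | h
  · subst h; rw [if_pos rfl]
    exact @Pi.single_eq_same I (fun _ => k) (fun _ => inferInstance) inst b c
  · rw [if_neg h]
    exact @Pi.single_eq_of_ne I (fun _ => k) (fun _ => inferInstance) inst _ _ h c

lemma basisA (hD : Is3TG G D) {b p : ↥D} (hpb : p ≠ b) (h3 : orderOf ((p:G) * b) = 3)
    (a' : ↥D) :
    matsuoBasisD k hD.selfConj ((1:k)/2) a' b p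
      = ((1:k)/2/2) * ((if p = a' then 1 else 0)
          - (if setConj hD.selfConj p b = a' then 1 else 0)) := by
  by_cases h1 : a' = b
  · subst h1
    unfold matsuoBasisD
    rw [if_pos rfl]
    have hq : ¬ (setConj hD.selfConj p a' = a') := by
      intro h
      have h' := (setConj_eq_iff hD a').mp h
      rw [setConj_self hD a'] at h'
      exact hpb h'
    rw [single_apply_gen, if_neg hpb, if_neg hq]
    ring
  · unfold matsuoBasisD
    rw [if_neg h1]
    by_cases h2 : orderOf ((a':G) * b) = 3
    · rw [if_pos h2]
      rw [Pi.smul_apply, Pi.sub_apply, Pi.add_apply, smul_eq_mul]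
      rw [single_apply_gen, single_apply_gen, single_apply_gen]
      have e1 : (if p = (b:↥D) then (1:k) else 0) = 0 := if_neg hpb
      have e2 : (if p = setConj hD.selfConj a' b then (1:k) else 0)
          = (if setConj hD.selfConj p b = a' then 1 else 0) := by
        apply if_congr _ rfl rfl
        constructor
        · intro h; exact ((setConj_eq_iff hD b).mp h.symm).symm
        · intro h; exact ((setConj_eq_iff hD b).mpr h.symm).symm
      rw [e1, e2]
      ring
    · rw [if_neg h2]
      have e1 : ¬ (p = a') := by
        rintro rfl; exact h2 h3
      have e2 : ¬ (setConj hD.selfConj p b = a') := by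
        rintro rfl
        exact h2 (by rw [orderOf_setConj_mul hD]; exact h3)
      rw [if_neg e1, if_neg e2]
      simp

lemma basisB (hD : Is3TG G D) {b p : ↥D} (hpb : p ≠ b) (hc : Commute (p:G) (b:G))
    (a' : ↥D) :
    matsuoBasisD k hD.selfConj ((1:k)/2) a' b p = 0 := by
  by_cases h1 : a' = b
  · subst h1
    unfold matsuoBasisD
    rw [if_pos rfl, single_apply_gen, if_neg hpb]
  · unfold matsuoBasisD
    rw [if_neg h1]
    by_cases h2 : orderOf ((a':G) * b) = 3
    · rw [if_pos h2]
      have hsc : setConj hD.selfConj p b = p :=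
        Subtype.ext (commute_iff_conjBy_eq.mp hc)
      have e0 : ¬ (p = a') := by
        rintro rfl
        exact hD.not_commute_of_three p.2 b.2 h2 hc
      have e2 : ¬ (p = setConj hD.selfConj a' b) := by
        intro h
        apply e0
        have := (setConj_eq_iff hD b).mp h.symm
        rw [hsc] at this
        exact this.symm
      rw [Pi.smul_apply, Pi.sub_apply, Pi.add_apply, smul_eq_mul]
      rw [single_apply_gen, single_apply_gen, single_apply_gen]
      rw [if_neg e0, if_neg hpb, if_neg e2]
      ring
    · rw [if_neg h2]; rfl

lemma basis_symm (hD : Is3TG G D) (a b : ↥D) :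
    matsuoBasisD k hD.selfConj ((1:k)/2) a b = matsuoBasisD k hD.selfConj ((1:k)/2) b a := by
  by_cases hab : a = b
  · subst hab; rfl
  · unfold matsuoBasisD
    rw [if_neg hab, if_neg (Ne.symm hab)]
    have horder : orderOf ((b:G) * a) = orderOf ((a:G) * b) := hD.orderOf_mul_comm a.2 b.2
    by_cases h3 : orderOf ((a:G) * (b:G)) = 3
    · rw [if_pos h3, if_pos (by rw [horder]; exact h3)]
      have hcs : setConj hD.selfConj a b = setConj hD.selfConj b a :=
        Subtype.ext (hD.conjBy_symm a.2 b.2 h3)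
      rw [hcs]
      congr 1
      ring
    · rw [if_neg h3, if_neg (by rw [horder]; exact h3)]

lemma mul_bvec_right (hD : Is3TG G D) (f : ↥D → k) (b p : ↥D) :
    matsuoMulD k hD.selfConj ((1:k)/2) f (bvec k b) p
      = ∑ a' : ↥D, f a' * matsuoBasisD k hD.selfConj ((1:k)/2) a' b p := by
  unfold matsuoMulD
  rw [Finset.sum_apply]
  refine Finset.sum_congr rfl fun a' _ => ?_
  rw [Finset.sum_apply]
  rw [Finset.sum_eq_single b]
  · show (f a' * bvec k b b) • matsuoBasisD k hD.selfConj ((1:k)/2) a' b p = _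
    unfold bvec
    rw [single_apply_gen, if_pos rfl, mul_one, smul_eq_mul]
  · intro b' _ hb'
    show (f a' * bvec k b b') • matsuoBasisD k hD.selfConj ((1:k)/2) a' b' p = 0
    unfold bvec
    rw [single_apply_gen, if_neg hb', mul_zero, zero_smul]
  · intro h; exact absurd (Finset.mem_univ b) h

lemma mul_bvec_left (hD : Is3TG G D) (f : ↥D → k) (a p : ↥D) :
    matsuoMulD k hD.selfConj ((1:k)/2) (bvec k a) f p
      = ∑ b' : ↥D, f b' * matsuoBasisD k hD.selfConj ((1:k)/2) b' a p := by
  unfold matsuoMulD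
  rw [Finset.sum_apply, Finset.sum_eq_single a]
  · rw [Finset.sum_apply]
    refine Finset.sum_congr rfl fun b' _ => ?_
    show (bvec k a a * f b') • matsuoBasisD k hD.selfConj ((1:k)/2) a b' p = _
    unfold bvec
    rw [single_apply_gen, if_pos rfl, one_mul, smul_eq_mul, basis_symm k hD]
  · intro a' _ ha'
    rw [Finset.sum_apply]
    apply Finset.sum_eq_zero
    intro b' _
    show (bvec k a a' * f b') • matsuoBasisD k hD.selfConj ((1:k)/2) a' b' p = 0
    unfold bvec
    rw [single_apply_gen, if_neg ha', zero_mul, zero_smul]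
  · intro h; exact absurd (Finset.mem_univ a) h

lemma mulA_right (hD : Is3TG G D) (f : ↥D → k) {b p : ↥D} (hpb : p ≠ b)
    (h3 : orderOf ((p:G) * b) = 3) :
    matsuoMulD k hD.selfConj ((1:k)/2) f (bvec k b) p
      = ((1:k)/2/2) * (f p - f (setConj hD.selfConj p b)) := by
  rw [mul_bvec_right k hD]
  rw [Finset.sum_congr rfl fun a' _ => by rw [basisA k hD hpb h3 a']]
  have : ∀ a' : ↥D, f a' * (((1:k)/2/2) * ((if p = a' then 1 else 0)
      - (if setConj hD.selfConj p b = a' then 1 else 0)))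
      = (if p = a' then ((1:k)/2/2) * f a' else 0)
        - (if setConj hD.selfConj p b = a' then ((1:k)/2/2) * f a' else 0) := by
    intro a'
    split_ifs <;> ring
  rw [Finset.sum_congr rfl fun a' _ => this a']
  rw [Finset.sum_sub_distrib, Finset.sum_ite_eq, Finset.sum_ite_eq]
  simp only [Finset.mem_univ, if_true]
  ring

lemma mulB_right (hD : Is3TG G D) (f : ↥D → k) {b p : ↥D} (hpb : p ≠ b)
    (hc : Commute (p:G) (b:G)) :
    matsuoMulD k hD.selfConj ((1:k)/2) f (bvec k b) p = 0 := by
  rw [mul_bvec_right k hD]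
  apply Finset.sum_eq_zero
  intro a' _
  rw [basisB k hD hpb hc a', mul_zero]

lemma mulA_left (hD : Is3TG G D) (f : ↥D → k) {a p : ↥D} (hpa : p ≠ a)
    (h3 : orderOf ((p:G) * a) = 3) :
    matsuoMulD k hD.selfConj ((1:k)/2) (bvec k a) f p
      = ((1:k)/2/2) * (f p - f (setConj hD.selfConj p a)) := by
  rw [mul_bvec_left k hD]
  rw [Finset.sum_congr rfl fun b' _ => by rw [basisA k hD hpa h3 b']]
  have : ∀ b' : ↥D, f b' * (((1:k)/2/2) * ((if p = b' then 1 else 0)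
      - (if setConj hD.selfConj p a = b' then 1 else 0)))
      = (if p = b' then ((1:k)/2/2) * f b' else 0)
        - (if setConj hD.selfConj p a = b' then ((1:k)/2/2) * f b' else 0) := by
    intro b'
    split_ifs <;> ring
  rw [Finset.sum_congr rfl fun b' _ => this b']
  rw [Finset.sum_sub_distrib, Finset.sum_ite_eq, Finset.sum_ite_eq]
  simp only [Finset.mem_univ, if_true]
  ring

lemma mulB_left (hD : Is3TG G D) (f : ↥D → k) {a p : ↥D} (hpa : p ≠ a)
    (hc : Commute (p:G) (a:G)) :
    matsuoMulD k hD.selfConj ((1:k)/2) (bvec k a) f p = 0 := by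
  rw [mul_bvec_left k hD]
  apply Finset.sum_eq_zero
  intro b' _
  rw [basisB k hD hpa hc b', mul_zero]

lemma mul_bvec_bvec (hD : Is3TG G D) (a b : ↥D) :
    matsuoMulD k hD.selfConj ((1:k)/2) (bvec k a) (bvec k b)
      = matsuoBasisD k hD.selfConj ((1:k)/2) a b := by
  funext p
  rw [mul_bvec_right k hD, Finset.sum_eq_single a]
  · show bvec k a a * _ = _
    unfold bvec
    rw [single_apply_gen, if_pos rfl, one_mul]
  · intro a' _ ha'
    show bvec k a a' * _ = 0
    unfold bvec
    rw [single_apply_gen, if_neg ha', zero_mul]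
  · intro h; exact absurd (Finset.mem_univ a) h

end MatsuoLemmas
section DerivationLemmas
variable {G : Type*} [Group G] {D : Set G} [Fintype ↥D] {k : Type*} [Field k]

lemma single_congr_inst {I : Type*} {M : I → Type*} {i1 i2 : DecidableEq I}
    {z : ∀ i, Zero (M i)} (a : I) (c : M a) :
    @Pi.single I M z i1 a c = @Pi.single I M z i2 a c := by
  have h : i1 = i2 := by funext x y; exact Subsingleton.elim _ _
  rw [h]

lemma hc4 {k : Type*} [Field k] (hk2 : (2:k) ≠ 0) : ((1:k)/2/2) * ((2:k)*2) = 1 := by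
  rw [div_div]; exact div_mul_cancel₀ 1 (mul_ne_zero hk2 hk2)

lemma sum_basis_diag (hD : Is3TG G D) (f : ↥D → k) (b : ↥D) :
    ∑ a' : ↥D, f a' * matsuoBasisD k hD.selfConj ((1:k)/2) a' b b
      = f b + ∑ a' : ↥D, (if orderOf ((a':G) * b) = 3 then ((1:k)/2/2) * f a' else 0) := by
  have key : ∀ a' : ↥D, f a' * matsuoBasisD k hD.selfConj ((1:k)/2) a' b b
      = (if a' = b then f a' else 0)
        + (if orderOf ((a':G) * b) = 3 then ((1:k)/2/2) * f a' else 0) := by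
    intro a'
    by_cases h1 : a' = b
    · subst h1
      unfold matsuoBasisD
      rw [if_pos rfl, single_apply_gen, if_pos rfl, if_pos rfl]
      have hno : ¬ orderOf ((a':G) * a') = 3 := by
        rw [hD.mul_self a'.2, orderOf_one]; omega
      rw [if_neg hno, mul_one, add_zero]
    · unfold matsuoBasisD
      rw [if_neg h1]
      by_cases h2 : orderOf ((a':G) * b) = 3
      · rw [if_pos h2, if_neg h1, if_pos h2]
        rw [Pi.smul_apply, Pi.sub_apply, Pi.add_apply, smul_eq_mul]
        rw [single_apply_gen, single_apply_gen, single_apply_gen]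
        have e1 : ¬ ((b:↥D) = a') := fun h => h1 h.symm
        have e3 : ¬ ((b:↥D) = setConj hD.selfConj a' b) := by
          intro h
          apply h1
          have h' := (setConj_eq_iff hD b).mp h.symm
          rw [setConj_self hD b] at h'
          exact h'
        rw [if_neg e1, if_pos rfl, if_neg e3, zero_add]
        ring
      · rw [if_neg h2, if_neg h1, if_neg h2, add_zero]
        simp
  rw [Finset.sum_congr rfl fun a' _ => key a']
  rw [Finset.sum_add_distrib, Finset.sum_ite_eq']
  simp only [Finset.mem_univ, if_true]

lemma mul_diag_right (hD : Is3TG G D) (f : ↥D → k) (b : ↥D) :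
    matsuoMulD k hD.selfConj ((1:k)/2) f (bvec k b) b
      = f b + ∑ a' : ↥D, (if orderOf ((a':G) * b) = 3 then ((1:k)/2/2) * f a' else 0) := by
  rw [mul_bvec_right k hD, sum_basis_diag hD]

lemma mul_diag_left (hD : Is3TG G D) (f : ↥D → k) (a : ↥D) :
    matsuoMulD k hD.selfConj ((1:k)/2) (bvec k a) f a
      = f a + ∑ b' : ↥D, (if orderOf ((b':G) * a) = 3 then ((1:k)/2/2) * f b' else 0) := by
  rw [mul_bvec_left k hD, sum_basis_diag hD]

variable (hD : Is3TG G D) (d : (↥D → k) →ₗ[k] (↥D → k))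
variable (hd : IsDerivation k (matsuoMulD k hD.selfConj ((1:k)/2)) d)

include hd

lemma self_identity (a : ↥D) :
    d (bvec k a) = matsuoMulD k hD.selfConj ((1:k)/2) (d (bvec k a)) (bvec k a)
      + matsuoMulD k hD.selfConj ((1:k)/2) (bvec k a) (d (bvec k a)) := by
  have h := hd (bvec k a) (bvec k a)
  have hb : matsuoMulD k hD.selfConj ((1:k)/2) (bvec k a) (bvec k a) = bvec k a := by
    rw [mul_bvec_bvec k hD]
    unfold matsuoBasisD bvec
    rw [if_pos rfl]
    exact single_congr_inst _ _
  rwa [hb] at h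

lemma lam_S1 {a b : ↥D} (hk2 : (2:k) ≠ 0) (h3 : orderOf ((a:G) * b) = 3) :
    d (bvec k a) b = - d (bvec k a) (setConj hD.selfConj b a) := by
  have hba : b ≠ a := fun h => (hD.ne_of_three a.2 b.2 h3) (by rw [h])
  have h3' : orderOf ((b:G) * a) = 3 := by
    rw [hD.orderOf_mul_comm a.2 b.2]; exact h3
  have h0 := congrFun (self_identity hD d hd a) b
  rw [Pi.add_apply, mulA_right k hD _ hba h3', mulA_left k hD _ hba h3'] at h0
  have h4 := hc4 hk2
  have h2 : (2:k) * (d (bvec k a) b + d (bvec k a) (setConj hD.selfConj b a)) = 0 := by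
    linear_combination (2*2:k) * h0
      + (2:k) * (d (bvec k a) b - d (bvec k a) (setConj hD.selfConj b a)) * h4
  rcases mul_eq_zero.mp h2 with h | h
  · exact absurd h hk2
  · exact eq_neg_of_add_eq_zero_left h

lemma lam_S2 {a b p : ↥D} (hk2 : (2:k) ≠ 0) (hab : a ≠ b) (hcomm : Commute (a:G) (b:G))
    (h3a : orderOf ((p:G) * a) = 3) (h3b : orderOf ((p:G) * b) = 3) :
    d (bvec k a) p - d (bvec k a) (setConj hD.selfConj p b)
      + d (bvec k b) p - d (bvec k b) (setConj hD.selfConj p a) = 0 := by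
  have hpa : p ≠ a := fun h => (hD.ne_of_three p.2 a.2 h3a) (by rw [h])
  have hpb : p ≠ b := fun h => (hD.ne_of_three p.2 b.2 h3b) (by rw [h])
  have hmul0 : matsuoMulD k hD.selfConj ((1:k)/2) (bvec k a) (bvec k b) = 0 := by
    rw [mul_bvec_bvec k hD]
    unfold matsuoBasisD
    rw [if_neg hab, if_neg (fun h => hD.not_commute_of_three a.2 b.2 h hcomm)]
  have h := hd (bvec k a) (bvec k b)
  rw [hmul0, map_zero] at h
  have h0 := congrFun h.symm p
  rw [Pi.add_apply, Pi.zero_apply, mulA_right k hD _ hpb h3b, mulA_left k hD _ hpa h3a] at h0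
  have h4 := hc4 hk2
  linear_combination (2*2:k) * h0
    - (d (bvec k a) p - d (bvec k a) (setConj hD.selfConj p b)
      + d (bvec k b) p - d (bvec k b) (setConj hD.selfConj p a)) * h4

lemma lam_S3 {a b p : ↥D} (hk2 : (2:k) ≠ 0) (h3 : orderOf ((a:G) * b) = 3) (hpb : p ≠ b)
    (hcomm : Commute (p:G) (b:G)) (h3pa : orderOf ((p:G) * a) = 3) :
    d (bvec k a) p - d (bvec k (setConj hD.selfConj a b)) p
      + d (bvec k b) (setConj hD.selfConj p a) = 0 := by
  have hab : a ≠ b := fun h => (hD.ne_of_three a.2 b.2 h3) (by rw [h])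
  have hpa : p ≠ a := fun h => (hD.ne_of_three p.2 a.2 h3pa) (by rw [h])
  have hBas : matsuoMulD k hD.selfConj ((1:k)/2) (bvec k a) (bvec k b)
      = ((1:k)/2/2) • (bvec k a + bvec k b - bvec k (setConj hD.selfConj a b)) := by
    rw [mul_bvec_bvec k hD]
    unfold matsuoBasisD bvec
    rw [if_neg hab, if_pos h3]
    congr <;> exact Subsingleton.elim _ _
  have h := hd (bvec k a) (bvec k b)
  rw [hBas, map_smul, map_sub, map_add] at h
  have h0 := congrFun h p
  rw [Pi.smul_apply, Pi.sub_apply, Pi.add_apply, smul_eq_mul, Pi.add_apply,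
    mulB_right k hD _ hpb hcomm, mulA_left k hD _ hpa h3pa, zero_add] at h0
  have h4 := hc4 hk2
  linear_combination (2*2:k) * h0
    - ((d (bvec k a) p + d (bvec k b) p - d (bvec k (setConj hD.selfConj a b)) p)
      - (d (bvec k b) p - d (bvec k b) (setConj hD.selfConj p a))) * h4

lemma lam_diag (hk2 : (2:k) ≠ 0) (a : ↥D) : d (bvec k a) a = 0 := by
  have h0 := congrFun (self_identity hD d hd a) a
  rw [Pi.add_apply, mul_diag_right hD, mul_diag_left hD] at h0
  have hS : ∑ a' : ↥D,
      (if orderOf ((a':G) * a) = 3 then ((1:k)/2/2) * d (bvec k a) a' else 0) = 0 := by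
    apply Finset.sum_involution (g := fun a' _ => setConj hD.selfConj a' a)
    · intro a' _
      by_cases h : orderOf ((a':G) * a) = 3
      · have h' : orderOf ((setConj hD.selfConj a' a : G) * a) = 3 := by
          rw [orderOf_setConj_mul hD]; exact h
        rw [if_pos h, if_pos h']
        have h3 : orderOf ((a:G) * a') = 3 := by
          rw [hD.orderOf_mul_comm a'.2 a.2]; exact h
        have hS1 := lam_S1 hD d hd hk2 h3
        linear_combination ((1:k)/2/2) * hS1
      · have h' : ¬ orderOf ((setConj hD.selfConj a' a : G) * a) = 3 := by
          rw [orderOf_setConj_mul hD]; exact h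
        rw [if_neg h, if_neg h']
        ring
    · intro a' _ hne
      by_cases h : orderOf ((a':G) * a) = 3
      · intro heq
        have hcomm : Commute ((a':G)) ((a:G)) :=
          commute_iff_conjBy_eq.mpr (Subtype.ext_iff.mp heq)
        exact hD.not_commute_of_three a'.2 a.2 h hcomm
      · rw [if_neg h] at hne
        exact absurd rfl hne
    · intro a' _; exact Finset.mem_univ _
    · intro a' _; exact setConj_setConj hD a' a
  rw [hS, add_zero] at h0
  linear_combination -h0

end DerivationLemmas
section Key

abbrev Vt := ZMod 2 × ZMod 2

variable {G : Type*} [Group G] {D : Set G} [Fintype ↥D] {k : Type*} [Field k]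

lemma kS1 (hD : Is3TG G D) (d : (↥D → k) →ₗ[k] (↥D → k))
    (hd : IsDerivation k (matsuoMulD k hD.selfConj ((1:k)/2)) d)
    (φ : Fin 3 → Vt → ↥D)
    (Hconj : ∀ r s t : Fin 3, r ≠ s → s ≠ t → t ≠ r → ∀ i j : Vt,
      setConj hD.selfConj (φ r i) (φ s j) = φ t (i + j))
    (Hord : ∀ r s : Fin 3, r ≠ s → ∀ i j : Vt, orderOf ((φ r i : G) * (φ s j : G)) = 3)
    (hk2 : (2:k) ≠ 0)
    (r s t : Fin 3) (hrs : r ≠ s) (hst : s ≠ t) (htr : t ≠ r)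
    (i j m : Vt) (hm : i + j = m) :
    d (bvec k (φ r i)) (φ s j) = - d (bvec k (φ r i)) (φ t m) := by
  have h := lam_S1 hD d hd hk2 (Hord r s hrs i j)
  rwa [Hconj s r t hrs.symm htr.symm hst.symm j i, add_comm j i, hm] at h

lemma kS2 (hD : Is3TG G D) (d : (↥D → k) →ₗ[k] (↥D → k))
    (hd : IsDerivation k (matsuoMulD k hD.selfConj ((1:k)/2)) d)
    (φ : Fin 3 → Vt → ↥D)
    (Hconj : ∀ r s t : Fin 3, r ≠ s → s ≠ t → t ≠ r → ∀ i j : Vt,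
      setConj hD.selfConj (φ r i) (φ s j) = φ t (i + j))
    (Hord : ∀ r s : Fin 3, r ≠ s → ∀ i j : Vt, orderOf ((φ r i : G) * (φ s j : G)) = 3)
    (Hcomm : ∀ r : Fin 3, ∀ i j : Vt, i ≠ j → Commute ((φ r i : G)) ((φ r j : G)))
    (Hne : ∀ r : Fin 3, ∀ i j : Vt, i ≠ j → φ r i ≠ φ r j)
    (hk2 : (2:k) ≠ 0)
    (r s t : Fin 3) (hrs : r ≠ s) (hst : s ≠ t) (htr : t ≠ r)
    (i j : Vt) (hij : i ≠ j) (l m m' : Vt) (hm : l + j = m) (hm' : l + i = m') :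
    d (bvec k (φ r i)) (φ s l) - d (bvec k (φ r i)) (φ t m)
      + d (bvec k (φ r j)) (φ s l) - d (bvec k (φ r j)) (φ t m') = 0 := by
  have h := lam_S2 hD d hd hk2 (Hne r i j hij) (Hcomm r i j hij)
    (Hord s r hrs.symm l i) (Hord s r hrs.symm l j)
  rwa [Hconj s r t hrs.symm htr.symm hst.symm l j, hm,
    Hconj s r t hrs.symm htr.symm hst.symm l i, hm'] at h

lemma kS3 (hD : Is3TG G D) (d : (↥D → k) →ₗ[k] (↥D → k))
    (hd : IsDerivation k (matsuoMulD k hD.selfConj ((1:k)/2)) d)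
    (φ : Fin 3 → Vt → ↥D)
    (Hconj : ∀ r s t : Fin 3, r ≠ s → s ≠ t → t ≠ r → ∀ i j : Vt,
      setConj hD.selfConj (φ r i) (φ s j) = φ t (i + j))
    (Hord : ∀ r s : Fin 3, r ≠ s → ∀ i j : Vt, orderOf ((φ r i : G) * (φ s j : G)) = 3)
    (Hcomm : ∀ r : Fin 3, ∀ i j : Vt, i ≠ j → Commute ((φ r i : G)) ((φ r j : G)))
    (Hne : ∀ r : Fin 3, ∀ i j : Vt, i ≠ j → φ r i ≠ φ r j)
    (hk2 : (2:k) ≠ 0)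
    (r s t : Fin 3) (hrs : r ≠ s) (hst : s ≠ t) (htr : t ≠ r)
    (i j l : Vt) (hlj : l ≠ j) (m m' : Vt) (hm : i + j = m) (hm' : l + i = m') :
    d (bvec k (φ r i)) (φ s l) - d (bvec k (φ t m)) (φ s l)
      + d (bvec k (φ s j)) (φ t m') = 0 := by
  have h := lam_S3 hD d hd hk2 (Hord r s hrs i j) (Hne s l j hlj) (Hcomm s l j hlj)
    (Hord s r hrs.symm l i)
  rwa [Hconj r s t hrs hst htr i j, hm,
    Hconj s r t hrs.symm htr.symm hst.symm l i, hm'] at h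

lemma key0 (hD : Is3TG G D) (d : (↥D → k) →ₗ[k] (↥D → k))
    (hd : IsDerivation k (matsuoMulD k hD.selfConj ((1:k)/2)) d)
    (φ : Fin 3 → Vt → ↥D)
    (Hconj : ∀ r s t : Fin 3, r ≠ s → s ≠ t → t ≠ r → ∀ i j : Vt,
      setConj hD.selfConj (φ r i) (φ s j) = φ t (i + j))
    (Hord : ∀ r s : Fin 3, r ≠ s → ∀ i j : Vt, orderOf ((φ r i : G) * (φ s j : G)) = 3)
    (Hcomm : ∀ r : Fin 3, ∀ i j : Vt, i ≠ j → Commute ((φ r i : G)) ((φ r j : G)))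
    (Hne : ∀ r : Fin 3, ∀ i j : Vt, i ≠ j → φ r i ≠ φ r j)
    (hk2 : (2:k) ≠ 0) :
    d (bvec k (φ 0 ((0,0) : Vt))) (φ 1 ((0,0) : Vt)) = 0 := by
  have h1 := kS1 hD d hd φ Hconj Hord hk2 0 1 2 (by decide) (by decide) (by decide) ((0,0) : Vt) ((0,0) : Vt) ((0,0) : Vt) (by decide)
  have h2 := kS3 hD d hd φ Hconj Hord Hcomm Hne hk2 0 1 2 (by decide) (by decide) (by decide) ((0,0) : Vt) ((0,0) : Vt) ((1,0) : Vt) (by decide) ((0,0) : Vt) ((1,0) : Vt) (by decide) (by decide)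
  have h3 := kS1 hD d hd φ Hconj Hord hk2 0 1 2 (by decide) (by decide) (by decide) ((0,0) : Vt) ((0,1) : Vt) ((0,1) : Vt) (by decide)
  have h4 := kS3 hD d hd φ Hconj Hord Hcomm Hne hk2 0 1 2 (by decide) (by decide) (by decide) ((0,0) : Vt) ((0,1) : Vt) ((0,0) : Vt) (by decide) ((0,1) : Vt) ((0,0) : Vt) (by decide) (by decide)
  have h5 := kS3 hD d hd φ Hconj Hord Hcomm Hne hk2 0 1 2 (by decide) (by decide) (by decide) ((0,0) : Vt) ((0,1) : Vt) ((1,0) : Vt) (by decide) ((0,1) : Vt) ((1,0) : Vt) (by decide) (by decide)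
  have h6 := kS3 hD d hd φ Hconj Hord Hcomm Hne hk2 0 1 2 (by decide) (by decide) (by decide) ((0,0) : Vt) ((0,1) : Vt) ((1,1) : Vt) (by decide) ((0,1) : Vt) ((1,1) : Vt) (by decide) (by decide)
  have h7 := kS2 hD d hd φ Hconj Hord Hcomm Hne hk2 0 1 2 (by decide) (by decide) (by decide) ((0,0) : Vt) ((0,1) : Vt) (by decide) ((0,0) : Vt) ((0,1) : Vt) ((0,0) : Vt) (by decide) (by decide)
  have h8 := kS2 hD d hd φ Hconj Hord Hcomm Hne hk2 0 1 2 (by decide) (by decide) (by decide) ((0,0) : Vt) ((0,1) : Vt) (by decide) ((0,1) : Vt) ((0,0) : Vt) ((0,1) : Vt) (by decide) (by decide)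
  have h9 := kS2 hD d hd φ Hconj Hord Hcomm Hne hk2 0 1 2 (by decide) (by decide) (by decide) ((0,0) : Vt) ((0,1) : Vt) (by decide) ((1,0) : Vt) ((1,1) : Vt) ((1,0) : Vt) (by decide) (by decide)
  have h10 := kS2 hD d hd φ Hconj Hord Hcomm Hne hk2 0 1 2 (by decide) (by decide) (by decide) ((0,0) : Vt) ((0,1) : Vt) (by decide) ((1,1) : Vt) ((1,0) : Vt) ((1,1) : Vt) (by decide) (by decide)
  have h11 := kS1 hD d hd φ Hconj Hord hk2 0 1 2 (by decide) (by decide) (by decide) ((0,0) : Vt) ((1,0) : Vt) ((1,0) : Vt) (by decide)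
  have h12 := kS3 hD d hd φ Hconj Hord Hcomm Hne hk2 0 1 2 (by decide) (by decide) (by decide) ((0,0) : Vt) ((1,0) : Vt) ((0,1) : Vt) (by decide) ((1,0) : Vt) ((0,1) : Vt) (by decide) (by decide)
  have h13 := kS3 hD d hd φ Hconj Hord Hcomm Hne hk2 0 1 2 (by decide) (by decide) (by decide) ((0,0) : Vt) ((1,0) : Vt) ((1,1) : Vt) (by decide) ((1,0) : Vt) ((1,1) : Vt) (by decide) (by decide)
  have h14 := kS2 hD d hd φ Hconj Hord Hcomm Hne hk2 0 1 2 (by decide) (by decide) (by decide) ((0,0) : Vt) ((1,0) : Vt) (by decide) ((0,0) : Vt) ((1,0) : Vt) ((0,0) : Vt) (by decide) (by decide)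
  have h15 := kS2 hD d hd φ Hconj Hord Hcomm Hne hk2 0 1 2 (by decide) (by decide) (by decide) ((0,0) : Vt) ((1,0) : Vt) (by decide) ((0,1) : Vt) ((1,1) : Vt) ((0,1) : Vt) (by decide) (by decide)
  have h16 := kS2 hD d hd φ Hconj Hord Hcomm Hne hk2 0 1 2 (by decide) (by decide) (by decide) ((0,0) : Vt) ((1,0) : Vt) (by decide) ((1,0) : Vt) ((0,0) : Vt) ((1,0) : Vt) (by decide) (by decide)
  have h17 := kS2 hD d hd φ Hconj Hord Hcomm Hne hk2 0 1 2 (by decide) (by decide) (by decide) ((0,0) : Vt) ((1,0) : Vt) (by decide) ((1,1) : Vt) ((0,1) : Vt) ((1,1) : Vt) (by decide) (by decide)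
  have h18 := kS1 hD d hd φ Hconj Hord hk2 0 1 2 (by decide) (by decide) (by decide) ((0,0) : Vt) ((1,1) : Vt) ((1,1) : Vt) (by decide)
  have h19 := kS2 hD d hd φ Hconj Hord Hcomm Hne hk2 0 1 2 (by decide) (by decide) (by decide) ((0,0) : Vt) ((1,1) : Vt) (by decide) ((1,1) : Vt) ((0,0) : Vt) ((1,1) : Vt) (by decide) (by decide)
  have h20 := kS1 hD d hd φ Hconj Hord hk2 0 1 2 (by decide) (by decide) (by decide) ((0,1) : Vt) ((0,0) : Vt) ((0,1) : Vt) (by decide)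
  have h21 := kS3 hD d hd φ Hconj Hord Hcomm Hne hk2 0 1 2 (by decide) (by decide) (by decide) ((0,1) : Vt) ((0,0) : Vt) ((1,0) : Vt) (by decide) ((0,1) : Vt) ((1,1) : Vt) (by decide) (by decide)
  have h22 := kS3 hD d hd φ Hconj Hord Hcomm Hne hk2 0 1 2 (by decide) (by decide) (by decide) ((0,1) : Vt) ((0,0) : Vt) ((1,1) : Vt) (by decide) ((0,1) : Vt) ((1,0) : Vt) (by decide) (by decide)
  have h23 := kS3 hD d hd φ Hconj Hord Hcomm Hne hk2 0 1 2 (by decide) (by decide) (by decide) ((0,1) : Vt) ((0,1) : Vt) ((0,0) : Vt) (by decide) ((0,0) : Vt) ((0,1) : Vt) (by decide) (by decide)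
  have h24 := kS3 hD d hd φ Hconj Hord Hcomm Hne hk2 0 1 2 (by decide) (by decide) (by decide) ((0,1) : Vt) ((0,1) : Vt) ((1,0) : Vt) (by decide) ((0,0) : Vt) ((1,1) : Vt) (by decide) (by decide)
  have h25 := kS1 hD d hd φ Hconj Hord hk2 0 1 2 (by decide) (by decide) (by decide) ((0,1) : Vt) ((1,0) : Vt) ((1,1) : Vt) (by decide)
  have h26 := kS3 hD d hd φ Hconj Hord Hcomm Hne hk2 0 1 2 (by decide) (by decide) (by decide) ((0,1) : Vt) ((1,0) : Vt) ((0,0) : Vt) (by decide) ((1,1) : Vt) ((0,1) : Vt) (by decide) (by decide)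
  have h27 := kS3 hD d hd φ Hconj Hord Hcomm Hne hk2 0 1 2 (by decide) (by decide) (by decide) ((0,1) : Vt) ((1,0) : Vt) ((1,1) : Vt) (by decide) ((1,1) : Vt) ((1,0) : Vt) (by decide) (by decide)
  have h28 := kS2 hD d hd φ Hconj Hord Hcomm Hne hk2 0 1 2 (by decide) (by decide) (by decide) ((0,1) : Vt) ((1,0) : Vt) (by decide) ((0,0) : Vt) ((1,0) : Vt) ((0,1) : Vt) (by decide) (by decide)
  have h29 := kS2 hD d hd φ Hconj Hord Hcomm Hne hk2 0 1 2 (by decide) (by decide) (by decide) ((0,1) : Vt) ((1,0) : Vt) (by decide) ((0,1) : Vt) ((1,1) : Vt) ((0,0) : Vt) (by decide) (by decide)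
  have h30 := kS2 hD d hd φ Hconj Hord Hcomm Hne hk2 0 1 2 (by decide) (by decide) (by decide) ((0,1) : Vt) ((1,0) : Vt) (by decide) ((1,0) : Vt) ((0,0) : Vt) ((1,1) : Vt) (by decide) (by decide)
  have h31 := kS1 hD d hd φ Hconj Hord hk2 0 1 2 (by decide) (by decide) (by decide) ((1,0) : Vt) ((0,0) : Vt) ((1,0) : Vt) (by decide)
  have h32 := kS3 hD d hd φ Hconj Hord Hcomm Hne hk2 0 1 2 (by decide) (by decide) (by decide) ((1,0) : Vt) ((0,0) : Vt) ((0,1) : Vt) (by decide) ((1,0) : Vt) ((1,1) : Vt) (by decide) (by decide)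
  have h33 := kS3 hD d hd φ Hconj Hord Hcomm Hne hk2 0 1 2 (by decide) (by decide) (by decide) ((1,0) : Vt) ((0,0) : Vt) ((1,0) : Vt) (by decide) ((1,0) : Vt) ((0,0) : Vt) (by decide) (by decide)
  have h34 := kS3 hD d hd φ Hconj Hord Hcomm Hne hk2 0 1 2 (by decide) (by decide) (by decide) ((1,0) : Vt) ((0,0) : Vt) ((1,1) : Vt) (by decide) ((1,0) : Vt) ((0,1) : Vt) (by decide) (by decide)
  have h35 := kS3 hD d hd φ Hconj Hord Hcomm Hne hk2 0 1 2 (by decide) (by decide) (by decide) ((1,0) : Vt) ((0,1) : Vt) ((0,0) : Vt) (by decide) ((1,1) : Vt) ((1,0) : Vt) (by decide) (by decide)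
  have h36 := kS3 hD d hd φ Hconj Hord Hcomm Hne hk2 0 1 2 (by decide) (by decide) (by decide) ((1,0) : Vt) ((0,1) : Vt) ((1,0) : Vt) (by decide) ((1,1) : Vt) ((0,0) : Vt) (by decide) (by decide)
  have h37 := kS3 hD d hd φ Hconj Hord Hcomm Hne hk2 0 1 2 (by decide) (by decide) (by decide) ((1,0) : Vt) ((0,1) : Vt) ((1,1) : Vt) (by decide) ((1,1) : Vt) ((0,1) : Vt) (by decide) (by decide)
  have h38 := kS3 hD d hd φ Hconj Hord Hcomm Hne hk2 0 1 2 (by decide) (by decide) (by decide) ((1,0) : Vt) ((1,0) : Vt) ((0,0) : Vt) (by decide) ((0,0) : Vt) ((1,0) : Vt) (by decide) (by decide)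
  have h39 := kS1 hD d hd φ Hconj Hord hk2 0 1 2 (by decide) (by decide) (by decide) ((1,1) : Vt) ((0,0) : Vt) ((1,1) : Vt) (by decide)
  have h40 := kS3 hD d hd φ Hconj Hord Hcomm Hne hk2 0 1 2 (by decide) (by decide) (by decide) ((1,1) : Vt) ((0,0) : Vt) ((1,0) : Vt) (by decide) ((1,1) : Vt) ((0,1) : Vt) (by decide) (by decide)
  have h41 := kS3 hD d hd φ Hconj Hord Hcomm Hne hk2 0 1 2 (by decide) (by decide) (by decide) ((1,1) : Vt) ((0,0) : Vt) ((1,1) : Vt) (by decide) ((1,1) : Vt) ((0,0) : Vt) (by decide) (by decide)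
  have h42 := kS3 hD d hd φ Hconj Hord Hcomm Hne hk2 0 1 2 (by decide) (by decide) (by decide) ((1,1) : Vt) ((0,1) : Vt) ((1,0) : Vt) (by decide) ((1,0) : Vt) ((0,1) : Vt) (by decide) (by decide)
  have h43 := kS3 hD d hd φ Hconj Hord Hcomm Hne hk2 0 1 2 (by decide) (by decide) (by decide) ((1,1) : Vt) ((1,0) : Vt) ((0,0) : Vt) (by decide) ((0,1) : Vt) ((1,1) : Vt) (by decide) (by decide)
  have hfin : (2:k) * ((2:k) * d (bvec k (φ 0 ((0,0) : Vt))) (φ 1 ((0,0) : Vt))) = 0 := by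
    linear_combination (2 : k) * h1 + ((-2) : k) * h2 + ((-2) : k) * h3 + (1 : k) * h4 + (1 : k) * h5 + ((-2) : k) * h6 + ((-1) : k) * h7 + (2 : k) * h8 + (1 : k) * h9 + ((-1) : k) * h10 + (1 : k) * h11 + ((-1) : k) * h12 + (1 : k) * h13 + (2 : k) * h14 + (1 : k) * h15 + ((-1) : k) * h16 + ((-1) : k) * h17 + (2 : k) * h18 + (1 : k) * h19 + (2 : k) * h20 + ((-1) : k) * h21 + (2 : k) * h22 + ((-1) : k) * h23 + (2 : k) * h24 + ((-3) : k) * h25 + (1 : k) * h26 + ((-1) : k) * h27 + ((-1) : k) * h28 + ((-2) : k) * h29 + (1 : k) * h30 + ((-1) : k) * h31 + (1 : k) * h32 + (1 : k) * h33 + ((-1) : k) * h34 + ((-1) : k) * h35 + ((-1) : k) * h36 + (2 : k) * h37 + (1 : k) * h38 + (1 : k) * h39 + (1 : k) * h40 + ((-1) : k) * h41 + ((-1) : k) * h42 + ((-1) : k) * h43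
  rcases mul_eq_zero.mp hfin with h | h
  · exact absurd h hk2
  rcases mul_eq_zero.mp h with h' | h'
  · exact absurd h' hk2
  exact h'

end Key
section KeyGen
variable {G : Type*} [Group G] {D : Set G} [Fintype ↥D] {k : Type*} [Field k]

lemma keyGen (hD : Is3TG G D) (d : (↥D → k) →ₗ[k] (↥D → k))
    (hd : IsDerivation k (matsuoMulD k hD.selfConj ((1:k)/2)) d)
    (φ : Fin 3 → Vt → ↥D)
    (Hconj : ∀ r s t : Fin 3, r ≠ s → s ≠ t → t ≠ r → ∀ i j : Vt,
      setConj hD.selfConj (φ r i) (φ s j) = φ t (i + j))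
    (Hord : ∀ r s : Fin 3, r ≠ s → ∀ i j : Vt, orderOf ((φ r i : G) * (φ s j : G)) = 3)
    (Hcomm : ∀ r : Fin 3, ∀ i j : Vt, i ≠ j → Commute ((φ r i : G)) ((φ r j : G)))
    (Hne : ∀ r : Fin 3, ∀ i j : Vt, i ≠ j → φ r i ≠ φ r j)
    (hk2 : (2:k) ≠ 0)
    (r s : Fin 3) (hrs : r ≠ s) (i j : Vt) :
    d (bvec k (φ r i)) (φ s j) = 0 := by
  have hex : ∀ r s : Fin 3, r ≠ s → ∃ t, t ≠ r ∧ t ≠ s := by decide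
  obtain ⟨t, htr, hts⟩ := hex r s hrs
  have hst : s ≠ t := Ne.symm hts
  have htr' : t ≠ r := htr
  have hMgen : ∀ a b c : Fin 3, a ≠ b → b ≠ c → c ≠ a →
      ∀ x y : Fin 3, x ≠ y → (![a,b,c] : Fin 3 → Fin 3) x ≠ ![a,b,c] y := by decide
  have hccgen : ∀ (u v : Vt) (x y z : Fin 3), x ≠ y → y ≠ z → z ≠ x →
      (![u, v, u + v] : Fin 3 → Vt) x + ![u, v, u + v] y = ![u, v, u + v] z := by decide
  have hz : ∀ v : Vt, ((0,0) : Vt) + v = v := by decide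
  have hMd : ∀ x y : Fin 3, x ≠ y → (![r,s,t] : Fin 3 → Fin 3) x ≠ ![r,s,t] y :=
    hMgen r s t hrs hst htr'
  have H1 : ∀ r' s' t' : Fin 3, r' ≠ s' → s' ≠ t' → t' ≠ r' → ∀ i' j' : Vt,
      setConj hD.selfConj (φ (![r,s,t] r') (i' + ![i,j,i+j] r'))
          (φ (![r,s,t] s') (j' + ![i,j,i+j] s'))
        = φ (![r,s,t] t') ((i' + j') + ![i,j,i+j] t') := by
    intro r' s' t' h1 h2 h3 i' j'
    rw [Hconj (![r,s,t] r') (![r,s,t] s') (![r,s,t] t') (hMd r' s' h1) (hMd s' t' h2)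
      (hMd t' r' h3)]
    congr 1
    linear_combination hccgen i j r' s' t' h1 h2 h3
  have H2 : ∀ r' s' : Fin 3, r' ≠ s' → ∀ i' j' : Vt,
      orderOf ((φ (![r,s,t] r') (i' + ![i,j,i+j] r') : G)
        * (φ (![r,s,t] s') (j' + ![i,j,i+j] s') : G)) = 3 := by
    intro r' s' h1 i' j'
    exact Hord _ _ (hMd r' s' h1) _ _
  have H3 : ∀ r' : Fin 3, ∀ i' j' : Vt, i' ≠ j' →
      Commute ((φ (![r,s,t] r') (i' + ![i,j,i+j] r') : G))
        ((φ (![r,s,t] r') (j' + ![i,j,i+j] r') : G)) := by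
    intro r' i' j' h1
    exact Hcomm _ _ _ (fun h => h1 (add_right_cancel h))
  have H4 : ∀ r' : Fin 3, ∀ i' j' : Vt, i' ≠ j' →
      φ (![r,s,t] r') (i' + ![i,j,i+j] r') ≠ φ (![r,s,t] r') (j' + ![i,j,i+j] r') := by
    intro r' i' j' h1
    exact Hne _ _ _ (fun h => h1 (add_right_cancel h))
  have hk := key0 hD d hd
    (fun r' v => φ (![r,s,t] r') (v + ![i,j,i+j] r')) H1 H2 H3 H4 hk2
  simpa [Matrix.cons_val_zero, Matrix.cons_val_one, Matrix.head_cons, hz] using hk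

end KeyGen

section Geometry

/-- An explicit Latin-square labelling of the 12 positive roots of `D₄`. -/
def Lroot : Fin 3 → Vt → (Fin 4 → ℤ) := fun r v =>
  if r = 0 then
    (if v = ((0,0) : Vt) then Pi.single 0 1 - Pi.single 1 1
     else if v = ((0,1) : Vt) then Pi.single 0 1 + Pi.single 1 1
     else if v = ((1,0) : Vt) then Pi.single 2 1 - Pi.single 3 1
     else Pi.single 2 1 + Pi.single 3 1)
  else if r = 1 then
    (if v = ((0,0) : Vt) then Pi.single 0 1 - Pi.single 2 1
     else if v = ((0,1) : Vt) then Pi.single 0 1 + Pi.single 2 1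
     else if v = ((1,0) : Vt) then Pi.single 1 1 - Pi.single 3 1
     else Pi.single 1 1 + Pi.single 3 1)
  else
    (if v = ((0,0) : Vt) then Pi.single 1 1 - Pi.single 2 1
     else if v = ((0,1) : Vt) then Pi.single 1 1 + Pi.single 2 1
     else if v = ((1,0) : Vt) then Pi.single 0 1 - Pi.single 3 1
     else Pi.single 0 1 + Pi.single 3 1)

lemma Lroot_mem : ∀ (r : Fin 3) (v : Vt), ∃ i j : Fin 4, i < j ∧
    (Lroot r v = Pi.single i 1 - Pi.single j 1 ∨ Lroot r v = Pi.single i 1 + Pi.single j 1) := by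
  decide

lemma LF0 : ∀ r s : Fin 3, r ≠ s → ∀ i j : Vt, Lroot r i ≠ Lroot s j := by decide

lemma LF1 : ∀ r s : Fin 3, r ≠ s → ∀ i j : Vt, ip4 (Lroot r i) (Lroot s j) ≠ 0 := by decide

lemma LF2 : ∀ r s t : Fin 3, r ≠ s → s ≠ t → t ≠ r → ∀ i j : Vt,
    (Lroot t (i+j) = refl4 (Lroot s j) (Lroot r i)
      ∨ Lroot t (i+j) = -refl4 (Lroot s j) (Lroot r i)) := by decide

lemma LF3 : ∀ r : Fin 3, ∀ i j : Vt, i ≠ j →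
    ip4 (Lroot r i) (Lroot r j) = 0 := by decide

lemma Lroot_surj : ∀ i j : Fin 4, i < j →
    (∃ r v, Lroot r v = Pi.single i 1 - Pi.single j 1)
      ∧ (∃ r v, Lroot r v = Pi.single i 1 + Pi.single j 1) := by decide

/-- The labelling as a map into `D4Pos`. -/
def LL (r : Fin 3) (v : Vt) : ↥D4Pos := ⟨Lroot r v, Lroot_mem r v⟩

lemma Lcover (χ : ↥D4Pos) : ∃ r v, LL r v = χ := by
  obtain ⟨i, j, hij, hc⟩ := χ.2
  rcases hc with h | h
  · obtain ⟨r, v, hrv⟩ := (Lroot_surj i j hij).1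
    exact ⟨r, v, Subtype.ext (by rw [h]; exact hrv)⟩
  · obtain ⟨r, v, hrv⟩ := (Lroot_surj i j hij).2
    exact ⟨r, v, Subtype.ext (by rw [h]; exact hrv)⟩

end Geometry
/-- If the line through `ψ(χ)` and `ψ(χ')` lies in a `D₄`-subspace,
then the coefficient `d(ψ(χ))_{ψ(χ')}` vanishes for every derivation `d`. -/
theorem statement3 (k : Type*) [Field k] (hk2 : (2 : k) ≠ 0)
    {G : Type*} [Group G] {D : Set G} [Fintype ↥D] (hD : Is3TG G D)
    (d : (↥D → k) →ₗ[k] (↥D → k))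
    (hd : IsDerivation k (matsuoMulD k hD.selfConj ((1 : k) / 2)) d)
    (ψ : ↥D4Pos → ↥D) (hψ : IsD4Subspace D ψ)
    (χ χ' : ↥D4Pos) (hχχ' : ip4 χ.1 χ'.1 ≠ 0) :
    d (bvec k (ψ χ)) (ψ χ') = 0 := by
  by_cases hchi : χ = χ'
  · subst hchi
    exact lam_diag hD d hd hk2 (ψ χ)
  · obtain ⟨r, i, hri⟩ := Lcover χ
    obtain ⟨s, j, hsj⟩ := Lcover χ'
    have hrs : r ≠ s := by
      rintro rfl
      have hij : i ≠ j := by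
        rintro rfl
        exact hchi (hri ▸ hsj ▸ rfl)
      have h0 := LF3 r i j hij
      have h1 : Lroot r i = χ.1 := congrArg Subtype.val hri
      have h2 : Lroot r j = χ'.1 := congrArg Subtype.val hsj
      rw [h1, h2] at h0
      exact hχχ' h0
    -- the labelled D₄ configuration inside D
    have hLLne : ∀ (a b : Fin 3) (x y : Vt), a ≠ b → LL a x ≠ LL b y := by
      intro a b x y hab h
      exact LF0 a b hab x y (congrArg Subtype.val h)
    have hLLne' : ∀ (a : Fin 3) (x y : Vt), x ≠ y → LL a x ≠ LL a y := by
      intro a x y hxy h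
      have hval : Lroot a x = Lroot a y := congrArg Subtype.val h
      have : (⟨x, y⟩ : Vt × Vt) ≠ ⟨x, y⟩ → False := fun hh => hh rfl
      -- derive contradiction from LF1-type injectivity: use ip4 with itself:
      -- distinct labels in the same part give distinct roots:
      have : ∀ a : Fin 3, ∀ x y : Vt, x ≠ y → Lroot a x ≠ Lroot a y := by decide
      exact this a x y hxy hval
    have H1 : ∀ r' s' t' : Fin 3, r' ≠ s' → s' ≠ t' → t' ≠ r' → ∀ i' j' : Vt,
        setConj hD.selfConj (ψ (LL r' i')) (ψ (LL s' j')) = ψ (LL t' (i' + j')) := by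
      intro r' s' t' h1 h2 h3 i' j'
      apply Subtype.ext
      show conjBy (ψ (LL r' i') : G) (ψ (LL s' j') : G) = (ψ (LL t' (i' + j')) : G)
      exact hψ.2.2 (LL r' i') (LL s' j') (LF1 r' s' h1 i' j') (LL t' (i' + j'))
        (LF2 r' s' t' h1 h2 h3 i' j')
    have H2 : ∀ r' s' : Fin 3, r' ≠ s' → ∀ i' j' : Vt,
        orderOf ((ψ (LL r' i') : G) * (ψ (LL s' j') : G)) = 3 := by
      intro r' s' h1 i' j'
      apply hD.orderOf_eq_three (ψ (LL r' i')).2 (ψ (LL s' j')).2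
      intro hc
      exact LF1 r' s' h1 i' j'
        ((hψ.2.1 (LL r' i') (LL s' j') (hLLne r' s' i' j' h1)).mp hc)
    have H3 : ∀ r' : Fin 3, ∀ i' j' : Vt, i' ≠ j' →
        Commute ((ψ (LL r' i') : G)) ((ψ (LL r' j') : G)) := by
      intro r' i' j' h1
      exact (hψ.2.1 (LL r' i') (LL r' j') (hLLne' r' i' j' h1)).mpr (LF3 r' i' j' h1)
    have H4 : ∀ r' : Fin 3, ∀ i' j' : Vt, i' ≠ j' → ψ (LL r' i') ≠ ψ (LL r' j') := by
      intro r' i' j' h1 h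
      exact hLLne' r' i' j' h1 (hψ.1 h)
    have hk := keyGen hD d hd (fun r' v => ψ (LL r' v)) H1 H2 H3 H4 hk2 r s hrs i j
    rw [hri, hsj] at hk
    exact hk

end Paper
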